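/- arXiv:1909.10494 — 3 statements merged into one kernel-verified Lean document; each statement's English description precedes it below -/
import Mathlib

section
/- Let G be a group with presentation ⟨X | R⟩ in which every generator is an involution and every relator has even length. Let x ∈ X and set I = X ∖ {x}. For every w ∈ G with w ≠ e, one has w ∈ G^I if and only if every reduced expression of w ends with the generator x (i.e. every expression of w as a product of l(w) generators has last factor x). -/
/-!
Every relator has even length, so word length mod 2 descends to a homomorphism `G → ℤ/2`;
hence `l(wy) ≠ l(w)`, so either `l(wy) < l(w)` or `l(wy) > l(w)`. As `y` is an involution,
`l(wy) < l(w)` holds exactly when some reduced expression of `w` ends with `y`. So `w ∈ G^I`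
iff no reduced expression of `w` ends with a letter other than `x`; since `w ≠ e`, its reduced
expressions are nonempty.
-/

/-- The length of an element of a presented group whose generators are involutions:
the least `r` such that `w` is a product of `r` images of generators. -/
noncomputable def genLength {α : Type*} (R : Set (FreeGroup α)) (w : PresentedGroup R) : ℕ :=
  sInf {r : ℕ | ∃ L : List α, L.length = r ∧
    (L.map (PresentedGroup.of : α → PresentedGroup R)).prod = w}

theorem FreeGroup.lift_const_ofAdd_one_mk {α : Type*} (L : List (α × Bool)) :
    FreeGroup.lift (fun _ : α => Multiplicative.ofAdd (1 : ZMod 2)) (FreeGroup.mk L) =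
      Multiplicative.ofAdd (L.length : ZMod 2) := by
  have hself_inv : (Multiplicative.ofAdd (1 : ZMod 2))⁻¹ = Multiplicative.ofAdd 1 := rfl
  simp only [FreeGroup.lift_mk, hself_inv, Bool.cond_self, List.map_const', List.prod_replicate,
    ← ofAdd_nsmul, nsmul_one]

namespace PresentedGroup

variable {α : Type*} {R : Set (FreeGroup α)}

theorem list_prod_map_of_concat (L : List α) (y : α) :
    ((L ++ [y]).map (of : α → PresentedGroup R)).prod = (L.map of).prod * of y := by
  simp

theorem mul_of_mul_of (hinv : ∀ x : α, (of x : PresentedGroup R) ^ 2 = 1) (w : PresentedGroup R)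
    (y : α) : w * of y * of y = w := by
  rw [mul_assoc, ← sq, hinv y, mul_one]

theorem exists_list_prod_map_of_eq (hinv : ∀ x : α, (of x : PresentedGroup R) ^ 2 = 1)
    (w : PresentedGroup R) : ∃ L : List α, (L.map of).prod = w := by
  induction w using PresentedGroup.induction_on with
  | H z =>
    induction z using FreeGroup.induction_on with
    | C1 => exact ⟨[], rfl⟩
    | of y => exact ⟨[y], mul_one _⟩
    | inv_of y _ =>
      refine ⟨[y], ?_⟩
      rw [map_inv, List.map_singleton, List.prod_singleton, eq_inv_iff_mul_eq_one]
      exact (sq (of y)).symm.trans (hinv y)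
    | mul u v hu hv =>
      obtain ⟨Lu, hLu⟩ := hu
      obtain ⟨Lv, hLv⟩ := hv
      exact ⟨Lu ++ Lv, by rw [List.map_append, List.prod_append, hLu, hLv, map_mul]⟩

noncomputable def parity [DecidableEq α] (heven : ∀ r ∈ R, Even (FreeGroup.toWord r).length) :
    PresentedGroup R →* Multiplicative (ZMod 2) :=
  toGroup (f := fun _ : α => Multiplicative.ofAdd 1) fun r hr => by
    rw [← FreeGroup.mk_toWord (x := r), FreeGroup.lift_const_ofAdd_one_mk,
      (heven r hr).natCast_zmod_two, ofAdd_zero]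

theorem parity_list_prod_map_of [DecidableEq α] (heven : ∀ r ∈ R, Even (FreeGroup.toWord r).length)
    (L : List α) : parity heven (L.map of).prod = Multiplicative.ofAdd (L.length : ZMod 2) := by
  simp only [map_list_prod, List.map_map, Function.comp_def, parity, toGroup.of,
    List.map_const', List.prod_replicate, ← ofAdd_nsmul, nsmul_one]

end PresentedGroup

section genLength

open PresentedGroup

variable {α : Type*} {R : Set (FreeGroup α)}

theorem genLength_le_length {w : PresentedGroup R} {L : List α} (h : (L.map of).prod = w) :
    genLength R w ≤ L.length :=
  Nat.sInf_le ⟨L, rfl, h⟩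

theorem exists_length_eq_genLength (hinv : ∀ x : α, (of x : PresentedGroup R) ^ 2 = 1)
    (w : PresentedGroup R) : ∃ L : List α, L.length = genLength R w ∧ (L.map of).prod = w :=
  let ⟨L, hL⟩ := exists_list_prod_map_of_eq hinv w
  Nat.sInf_mem (s := {r | ∃ L : List α, L.length = r ∧ (L.map of).prod = w}) ⟨L.length, L, rfl, hL⟩

theorem parity_eq_genLength [DecidableEq α] (hinv : ∀ x : α, (of x : PresentedGroup R) ^ 2 = 1)
    (heven : ∀ r ∈ R, Even (FreeGroup.toWord r).length) (w : PresentedGroup R) :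
    parity heven w = Multiplicative.ofAdd (genLength R w : ZMod 2) := by
  obtain ⟨L, hlen, hprod⟩ := exists_length_eq_genLength hinv w
  rw [← hlen, ← parity_list_prod_map_of, hprod]

theorem genLength_mul_of_ne [DecidableEq α] (hinv : ∀ x : α, (of x : PresentedGroup R) ^ 2 = 1)
    (heven : ∀ r ∈ R, Even (FreeGroup.toWord r).length) (w : PresentedGroup R) (y : α) :
    genLength R (w * of y) ≠ genLength R w := by
  intro h
  have hparity := parity_eq_genLength hinv heven (w * of y)
  rw [map_mul, parity_eq_genLength hinv heven, h, parity, toGroup.of, ← ofAdd_add] at hparity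
  simpa using Multiplicative.ofAdd.injective hparity

theorem genLength_mul_of_lt_iff (hinv : ∀ x : α, (of x : PresentedGroup R) ^ 2 = 1)
    (w : PresentedGroup R) (y : α) :
    genLength R (w * of y) < genLength R w ↔
      ∃ L : List α, L.length = genLength R w ∧ (L.map of).prod = w ∧ L.getLast? = some y := by
  constructor
  · intro hlt
    obtain ⟨M, hlen, hprod⟩ := exists_length_eq_genLength hinv (w * of y)
    have hMy : ((M ++ [y]).map of).prod = w := by
      rw [list_prod_map_of_concat, hprod, mul_of_mul_of hinv]
    have hle := genLength_le_length hMy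
    refine ⟨M ++ [y], ?_, hMy, List.getLast?_concat⟩
    simp only [List.length_append, List.length_singleton] at hle ⊢
    omega
  · rintro ⟨L, hlen, hprod, hlast⟩
    obtain ⟨M, rfl⟩ : ∃ M, L = M ++ [y] :=
      ⟨L.dropLast, (List.dropLast_append_getLast? y hlast).symm⟩
    have hM : (M.map of).prod = w * of y := by
      rw [← hprod, list_prod_map_of_concat, mul_of_mul_of hinv]
    have hle := genLength_le_length hM
    simp only [List.length_append, List.length_singleton] at hlen
    omega

end genLength

theorem stmt_4 {α : Type*} [DecidableEq α] (R : Set (FreeGroup α))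
    (hinv : ∀ x : α, (PresentedGroup.of x : PresentedGroup R) ^ 2 = 1)
    (heven : ∀ r ∈ R, Even (FreeGroup.toWord r).length)
    (x : α) (w : PresentedGroup R) (hw : w ≠ 1) :
    (∀ y ∈ (Set.univ \ {x} : Set α),
        genLength R w < genLength R (w * PresentedGroup.of y)) ↔
      ∀ L : List α, L.length = genLength R w →
        (L.map (PresentedGroup.of : α → PresentedGroup R)).prod = w →
        L.getLast? = some x := by
  constructor
  · intro hascent L hlen hprod
    obtain ⟨M, y, rfl⟩ : ∃ M y, L = M ++ [y] := by
      refine (L.eq_nil_or_concat').resolve_left ?_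
      rintro rfl
      exact hw hprod.symm
    have hdescent := (genLength_mul_of_lt_iff hinv w y).2 ⟨_, hlen, hprod, List.getLast?_concat⟩
    have hyx : y = x := by
      by_contra hyx
      exact (hascent y ⟨trivial, hyx⟩).asymm hdescent
    rw [List.getLast?_concat, hyx]
  · intro hreduced y ⟨_, hyx⟩
    have hnot_descent : ¬ genLength R (w * PresentedGroup.of y) < genLength R w := by
      rintro hdescent
      obtain ⟨L, hlen, hprod, hlast⟩ := (genLength_mul_of_lt_iff hinv w y).1 hdescent
      exact hyx (Option.some.inj (hlast.symm.trans (hreduced L hlen hprod)))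
    have hne := genLength_mul_of_ne hinv heven w y
    omega
end

section
/- Let G be the cluster group with presentation on generators t₁, t₂, t₃ subject to the relations t₁² = t₂² = t₃² = e, the braid relations, and the cycle relations, and let I = {t₁, t₂}. The element w = t₂t₃t₁t₂ admits two distinct factorisations w = ab = a′b′ with a, a′ ∈ G^I, b, b′ ∈ G_I, and l(w) = l(a) + l(b) = l(a′) + l(b′): namely a = t₂t₃, b = t₁t₂, a′ = t₁t₂t₃, b′ = t₁, where l(w) = 4, l(a) = l(b) = 2, l(a′) = 3, l(b′) = 1, and a ≠ a′, b ≠ b′. Hence the factorisation of elements of G with respect to a parabolic subgroup is not unique in general. -/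
/-- The relators of the cluster group presentation associated to the quiver of
mutation-Dynkin type A₃: the generators `t₁, t₂, t₃` (indexed by `0, 1, 2 : Fin 3`) are
involutions, they satisfy the braid relations and the cycle relations. -/
def clusterRels : Set (FreeGroup (Fin 3)) :=
  { FreeGroup.of 0 ^ 2, FreeGroup.of 1 ^ 2, FreeGroup.of 2 ^ 2,
    (FreeGroup.of 0 * FreeGroup.of 1 * FreeGroup.of 0) *
      (FreeGroup.of 1 * FreeGroup.of 0 * FreeGroup.of 1)⁻¹,
    (FreeGroup.of 0 * FreeGroup.of 2 * FreeGroup.of 0) *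
      (FreeGroup.of 2 * FreeGroup.of 0 * FreeGroup.of 2)⁻¹,
    (FreeGroup.of 1 * FreeGroup.of 2 * FreeGroup.of 1) *
      (FreeGroup.of 2 * FreeGroup.of 1 * FreeGroup.of 2)⁻¹,
    (FreeGroup.of 0 * FreeGroup.of 1 * FreeGroup.of 2 * FreeGroup.of 0) *
      (FreeGroup.of 1 * FreeGroup.of 2 * FreeGroup.of 0 * FreeGroup.of 1)⁻¹,
    (FreeGroup.of 1 * FreeGroup.of 2 * FreeGroup.of 0 * FreeGroup.of 1) *
      (FreeGroup.of 2 * FreeGroup.of 0 * FreeGroup.of 1 * FreeGroup.of 2)⁻¹ }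

/-- The cluster group of mutation-Dynkin type A₃. -/
abbrev ClusterGroupA3 : Type := PresentedGroup clusterRels

/-- `t i` is the image in the cluster group of the generator `tᵢ₊₁`. -/
def t (i : Fin 3) : ClusterGroupA3 := PresentedGroup.of i

/-- The length of an element of the cluster group: the least `r` such that `w` is a
product of `r` generators. -/
noncomputable def len (w : ClusterGroupA3) : ℕ :=
  sInf {r : ℕ | ∃ L : List (Fin 3), L.length = r ∧ (L.map t).prod = w}

/-- `w` lies in `G^I` for `I = {t₁, t₂}`. -/
def mem_GI_upper (w : ClusterGroupA3) : Prop :=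
  ∀ x ∈ ({0, 1} : Set (Fin 3)), len w < len (w * t x)

/-!
The upper bounds on lengths are the displayed words, and `w = a'b'` is the cycle relation
`t₁t₂t₃t₁ = t₂t₃t₁t₂`. For the lower bounds, `tᵢ ↦ (0 i)` respects all relators, so it defines
a homomorphism `G → S₄`; a word of length `r` for `g` maps to a product of `r` star
transpositions, so `len g ≥ k + 1` as soon as the image of `g` lies outside the (finite,
decidable) Cayley ball of radius `k`. The inequalities `a ≠ a'`, `b ≠ b'` follow from the lengths.
-/

def starTransposition (i : Fin 3) : Equiv.Perm (Fin 4) := Equiv.swap 0 i.succ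

theorem starTransposition_satisfies_clusterRels :
    ∀ r ∈ clusterRels, FreeGroup.lift starTransposition r = 1 := by
  simp only [clusterRels, Set.mem_insert_iff, Set.mem_singleton_iff]
  rintro r (rfl | rfl | rfl | rfl | rfl | rfl | rfl | rfl) <;>
    simp only [map_mul, map_inv, map_pow, FreeGroup.lift_apply_of] <;> decide

def toPerm : ClusterGroupA3 →* Equiv.Perm (Fin 4) :=
  PresentedGroup.toGroup starTransposition_satisfies_clusterRels

@[simp]
theorem toPerm_t (i : Fin 3) : toPerm (t i) = starTransposition i :=
  PresentedGroup.toGroup.of _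

theorem toPerm_prod_map_t (L : List (Fin 3)) :
    toPerm (L.map t).prod = (L.map starTransposition).prod := by
  simp [map_list_prod, Function.comp_def]

theorem t_mul_self (i : Fin 3) : t i * t i = 1 := by
  rw [← sq]
  exact PresentedGroup.one_of_mem (by fin_cases i <;> simp [clusterRels])

theorem t_inv (i : Fin 3) : (t i)⁻¹ = t i :=
  inv_eq_of_mul_eq_one_right (t_mul_self i)

theorem exists_word (w : ClusterGroupA3) : ∃ L : List (Fin 3), (L.map t).prod = w := by
  have hw : w ∈ Subgroup.closure (Set.range t) :=
    (PresentedGroup.closure_range_of clusterRels).symm ▸ Subgroup.mem_top w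
  induction hw using Subgroup.closure_induction with
  | mem _ hx =>
    obtain ⟨i, rfl⟩ := hx
    exact ⟨[i], by simp⟩
  | one => exact ⟨[], rfl⟩
  | mul _ _ _ _ hx hy =>
    obtain ⟨L, rfl⟩ := hx
    obtain ⟨M, rfl⟩ := hy
    exact ⟨L ++ M, by simp⟩
  | inv _ _ hx =>
    obtain ⟨L, rfl⟩ := hx
    exact ⟨L.reverse, by
      simp [List.prod_inv_reverse, List.map_reverse, Function.comp_def, t_inv]⟩

/-- The ball of radius `k` about `1` in the Cayley graph of `S₄` on the star transpositions. -/
def starBall : ℕ → Finset (Equiv.Perm (Fin 4))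
  | 0 => {1}
  | k + 1 => starBall k ∪ (Finset.univ ×ˢ starBall k).image fun p => starTransposition p.1 * p.2

theorem starBall_mono : Monotone starBall :=
  monotone_nat_of_le_succ fun _ => Finset.subset_union_left

theorem prod_map_starTransposition_mem_starBall (L : List (Fin 3)) :
    (L.map starTransposition).prod ∈ starBall L.length := by
  induction L with
  | nil => simp [starBall]
  | cons i L ih =>
    simp only [starBall, List.map_cons, List.prod_cons, List.length_cons, Finset.mem_union,
      Finset.mem_image, Finset.mem_product, Finset.mem_univ, true_and]
    exact Or.inr ⟨(i, _), ih, rfl⟩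

theorem len_prod_map_t_le (L : List (Fin 3)) : len (L.map t).prod ≤ L.length :=
  Nat.sInf_le ⟨L, rfl, rfl⟩

theorem exists_word_length_eq_len (w : ClusterGroupA3) :
    ∃ L : List (Fin 3), L.length = len w ∧ (L.map t).prod = w :=
  let ⟨L, hL⟩ := exists_word w
  Nat.sInf_mem (s := {r | ∃ L : List (Fin 3), L.length = r ∧ (L.map t).prod = w})
    ⟨L.length, L, rfl, hL⟩

theorem toPerm_mem_starBall_len (w : ClusterGroupA3) : toPerm w ∈ starBall (len w) := by
  obtain ⟨L, hL, rfl⟩ := exists_word_length_eq_len w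
  rw [toPerm_prod_map_t, ← hL]
  exact prod_map_starTransposition_mem_starBall L

theorem len_eq_length_of_prod_eq {w : ClusterGroupA3} (L : List (Fin 3))
    (hw : (L.map t).prod = w) (h : (L.map starTransposition).prod ∉ starBall (L.length - 1)) :
    len w = L.length := by
  subst hw
  refine le_antisymm (len_prod_map_t_le L) (not_lt.1 fun hlt => h ?_)
  rw [← toPerm_prod_map_t]
  exact starBall_mono (by omega) (toPerm_mem_starBall_len _)

theorem mem_GI_upper_iff {w : ClusterGroupA3} :
    mem_GI_upper w ↔ len w < len (w * t 0) ∧ len w < len (w * t 1) := by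
  simp [mem_GI_upper]

theorem t_cycle_rel : t 0 * t 1 * t 2 * t 0 = t 1 * t 2 * t 0 * t 1 :=
  PresentedGroup.mk_eq_mk_of_mul_inv_mem (rels := clusterRels)
    (x := FreeGroup.of 0 * FreeGroup.of 1 * FreeGroup.of 2 * FreeGroup.of 0)
    (y := FreeGroup.of 1 * FreeGroup.of 2 * FreeGroup.of 0 * FreeGroup.of 1)
    (by simp [clusterRels])

/-- For `I = {t₁, t₂}`, the element `w = t₂t₃t₁t₂` admits two distinct length-additive
factorisations `w = ab = a′b′` with `a, a′ ∈ G^I` and `b, b′ ∈ G_I`: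
`a = t₂t₃`, `b = t₁t₂`, `a′ = t₁t₂t₃`, `b′ = t₁`.  Hence the factorisation with
respect to a parabolic subgroup is not unique in general. -/
theorem stmt_14 :
    let w : ClusterGroupA3 := t 1 * t 2 * t 0 * t 1
    let a : ClusterGroupA3 := t 1 * t 2
    let b : ClusterGroupA3 := t 0 * t 1
    let a' : ClusterGroupA3 := t 0 * t 1 * t 2
    let b' : ClusterGroupA3 := t 0
    mem_GI_upper a ∧ mem_GI_upper a' ∧
    b ∈ Subgroup.closure {t 0, t 1} ∧ b' ∈ Subgroup.closure {t 0, t 1} ∧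
    w = a * b ∧ w = a' * b' ∧
    len w = 4 ∧ len a = 2 ∧ len b = 2 ∧ len a' = 3 ∧ len b' = 1 ∧
    len w = len a + len b ∧ len w = len a' + len b' ∧
    a ≠ a' ∧ b ≠ b' := by
  intro w a b a' b'
  have hw : len w = 4 :=
    len_eq_length_of_prod_eq [1, 2, 0, 1] (by simp [w, mul_assoc]) (by decide)
  have ha : len a = 2 := len_eq_length_of_prod_eq [1, 2] (by simp [a]) (by decide)
  have hb : len b = 2 := len_eq_length_of_prod_eq [0, 1] (by simp [b]) (by decide)
  have ha' : len a' = 3 :=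
    len_eq_length_of_prod_eq [0, 1, 2] (by simp [a', mul_assoc]) (by decide)
  have hb' : len b' = 1 := len_eq_length_of_prod_eq [0] (by simp [b']) (by decide)
  have ha0 : len (a * t 0) = 3 :=
    len_eq_length_of_prod_eq [1, 2, 0] (by simp [a, mul_assoc]) (by decide)
  have ha1 : len (a * t 1) = 3 :=
    len_eq_length_of_prod_eq [1, 2, 1] (by simp [a, mul_assoc]) (by decide)
  have ha'0 : len (a' * t 0) = 4 :=
    len_eq_length_of_prod_eq [0, 1, 2, 0] (by simp [a', mul_assoc]) (by decide)
  have ha'1 : len (a' * t 1) = 4 :=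
    len_eq_length_of_prod_eq [0, 1, 2, 1] (by simp [a', mul_assoc]) (by decide)
  refine ⟨mem_GI_upper_iff.2 ⟨by omega, by omega⟩, mem_GI_upper_iff.2 ⟨by omega, by omega⟩,
    mul_mem (Subgroup.subset_closure (Set.mem_insert _ _))
      (Subgroup.subset_closure (Set.mem_insert_of_mem _ rfl)),
    Subgroup.subset_closure (Set.mem_insert _ _), mul_assoc (t 1 * t 2) (t 0) (t 1),
    t_cycle_rel.symm, hw, ha, hb, ha', hb', by omega, by omega,
    ne_of_apply_ne len (by omega), ne_of_apply_ne len (by omega)⟩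
end

section
/- Let G be the cluster group with presentation on generators t₁, t₂, t₃ subject to the relations t₁² = t₂² = t₃² = e, the braid relations, and the cycle relations, and let I = {t₁, t₂}. For w = t₁t₂t₃ one has l(w) = 3, the element t₂t₃ lies in the coset wG_I and has length 2 (which is the minimal length among elements of wG_I), yet the only pair (a, b) with a ∈ G^I, b ∈ G_I, w = ab and l(w) = l(a) + l(b) is a = w, b = e. Hence a minimal length element of the coset wG_I need not yield a length-additive factorisation of w. -/
/-- The left coset `wG_I` for `I = {t₁, t₂}`. -/
def leftCoset_GI (w : ClusterGroupA3) : Set ClusterGroupA3 :=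
  {u | ∃ b ∈ Subgroup.closure ({t 0, t 1} : Set ClusterGroupA3), u = w * b}

/-!
Let `tᵢ` act on `{0, 1, 2, 3}` as the transposition `(0 i)`; the relators hold in `S₄`, so this
defines `toPerm : G →* S₄`. Each generator moves exactly one point of `{1, 2, 3}`, so the number of
points of `{1, 2, 3}` moved by `toPerm g` is a lower bound for `l(g)`. The element `w = t₁t₂t₃`
acts as the `4`-cycle `(0 3 2 1)`, which moves all three points, and every element of `wG_I`
sends `3 ↦ 2`, hence moves `2` and `3`. In a length-additive factorisation `w = ab` with `b ≠ e`
this forces `l(a) = 2` and `b = tⱼ` with `j ∈ {1, 2}`, but then `a = wtⱼ` moves all three points.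
-/

open Equiv
open scoped Finset

section MovedPoints

variable {α : Type*} [DecidableEq α] [Fintype α]

theorem Equiv.Perm.card_support_erase_mul_le (a : α) (p q : Perm α) :
    #((p * q).support.erase a) ≤ #(p.support.erase a) + #(q.support.erase a) :=
  calc #((p * q).support.erase a)
      ≤ #((p.support ∪ q.support).erase a) :=
        Finset.card_le_card (Finset.erase_subset_erase a (Perm.support_mul_le p q))
    _ ≤ #(p.support.erase a) + #(q.support.erase a) := by
        rw [Finset.erase_union_distrib]; exact Finset.card_union_le _ _

theorem Equiv.Perm.card_support_erase_swap {a b : α} (h : a ≠ b) :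
    #((swap a b).support.erase a) = 1 := by
  rw [Perm.support_swap h, Finset.erase_insert (by simpa using h), Finset.card_singleton]

theorem Equiv.Perm.two_le_card_support_erase {a x y : α} {p : Perm α} (hxy : x ≠ y)
    (hx : x ≠ a) (hy : y ≠ a) (hp : p x = y) : 2 ≤ #(p.support.erase a) := by
  have hxs : x ∈ p.support.erase a := by simp [hx, hp, hxy.symm]
  have hys : y ∈ p.support.erase a := by
    refine Finset.mem_erase.mpr ⟨hy, Perm.mem_support.mpr fun hpy => hxy ?_⟩
    exact p.injective (hp.trans hpy.symm)
  calc 2 = #{x, y} := (Finset.card_pair hxy).symm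
    _ ≤ #(p.support.erase a) :=
      Finset.card_le_card (Finset.insert_subset hxs (Finset.singleton_subset_iff.mpr hys))

end MovedPoints

namespace ClusterGroupA3

theorem t_mul_self (i : Fin 3) : t i * t i = 1 := by
  have h := PresentedGroup.one_of_mem (rels := clusterRels) (x := FreeGroup.of i ^ 2)
    (by fin_cases i <;> simp [clusterRels])
  rwa [map_pow, sq] at h

theorem t_inv (i : Fin 3) : (t i)⁻¹ = t i :=
  inv_eq_of_mul_eq_one_right (t_mul_self i)

theorem cycle_rel : t 0 * t 1 * t 2 * t 0 = t 1 * t 2 * t 0 * t 1 :=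
  PresentedGroup.mk_eq_mk_of_mul_inv_mem (by simp [clusterRels])

theorem inv_prod_map_t (L : List (Fin 3)) : ((L.map t).prod)⁻¹ = (L.reverse.map t).prod := by
  induction L with
  | nil => simp
  | cons i L ih => simp [ih, t_inv]

theorem exists_prod_map_t_eq (g : ClusterGroupA3) : ∃ L : List (Fin 3), (L.map t).prod = g := by
  have hg : g ∈ Subgroup.closure (Set.range t) := by
    rw [show Set.range t = Set.range PresentedGroup.of from rfl,
      PresentedGroup.closure_range_of]
    trivial
  induction hg using Subgroup.closure_induction with
  | mem x hx => obtain ⟨i, rfl⟩ := hx; exact ⟨[i], by simp⟩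
  | one => exact ⟨[], by simp⟩
  | mul x y _ _ hx hy =>
    obtain ⟨L₁, rfl⟩ := hx
    obtain ⟨L₂, rfl⟩ := hy
    exact ⟨L₁ ++ L₂, by simp⟩
  | inv x _ hx =>
    obtain ⟨L, rfl⟩ := hx
    exact ⟨L.reverse, (inv_prod_map_t L).symm⟩

theorem exists_length_eq_len (g : ClusterGroupA3) :
    ∃ L : List (Fin 3), L.length = len g ∧ (L.map t).prod = g := by
  obtain ⟨L, hL⟩ := exists_prod_map_t_eq g
  exact Nat.sInf_mem (s := {r | ∃ L : List (Fin 3), L.length = r ∧ (L.map t).prod = g})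
    ⟨L.length, L, rfl, hL⟩

theorem len_le_length {g : ClusterGroupA3} (L : List (Fin 3)) (h : (L.map t).prod = g) :
    len g ≤ L.length :=
  Nat.sInf_le ⟨L, rfl, h⟩

theorem len_eq_zero_iff {g : ClusterGroupA3} : len g = 0 ↔ g = 1 := by
  refine ⟨fun h => ?_, fun h => Nat.eq_zero_of_le_zero (len_le_length [] (by simp [h]))⟩
  obtain ⟨L, hL, rfl⟩ := exists_length_eq_len g
  simp [List.length_eq_zero_iff.mp (hL.trans h)]

theorem exists_eq_t_of_len_eq_one {g : ClusterGroupA3} (h : len g = 1) : ∃ i, g = t i := by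
  obtain ⟨L, hL, rfl⟩ := exists_length_eq_len g
  obtain ⟨i, rfl⟩ := List.length_eq_one_iff.mp (hL.trans h)
  exact ⟨i, by simp⟩

theorem le_len_of_le_t_mul {f : ClusterGroupA3 → ℕ} (h₁ : f 1 = 0)
    (hmul : ∀ i g, f (t i * g) ≤ f g + 1) (g : ClusterGroupA3) : f g ≤ len g := by
  have hword (L : List (Fin 3)) : f (L.map t).prod ≤ L.length := by
    induction L with
    | nil => simp [h₁]
    | cons i L ih => simpa using (hmul i _).trans (Nat.add_le_add_right ih 1)
  obtain ⟨L, hL, rfl⟩ := exists_length_eq_len g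
  exact hL ▸ hword L

theorem relators_map_one :
    ∀ r ∈ clusterRels, FreeGroup.lift (fun i : Fin 3 => swap (0 : Fin 4) i.succ) r = 1 := by
  simp only [clusterRels, Set.mem_insert_iff, Set.mem_singleton_iff]
  rintro r (rfl | rfl | rfl | rfl | rfl | rfl | rfl | rfl) <;>
    (simp only [map_mul, map_pow, map_inv, FreeGroup.lift_apply_of]; decide)

def toPerm : ClusterGroupA3 →* Perm (Fin 4) := PresentedGroup.toGroup relators_map_one

@[simp]
theorem toPerm_t (i : Fin 3) : toPerm (t i) = swap 0 i.succ :=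
  PresentedGroup.toGroup.of relators_map_one

def movedCount (g : ClusterGroupA3) : ℕ := #((toPerm g).support.erase 0)

theorem movedCount_le_len (g : ClusterGroupA3) : movedCount g ≤ len g := by
  refine le_len_of_le_t_mul (by simp [movedCount]) (fun i g => ?_) g
  unfold movedCount
  rw [map_mul, ← Perm.card_support_erase_swap (Fin.succ_ne_zero i).symm, add_comm, toPerm_t]
  exact Perm.card_support_erase_mul_le _ _ _

theorem toPerm_apply_three_of_mem_closure {b : ClusterGroupA3}
    (hb : b ∈ Subgroup.closure {t 0, t 1}) : toPerm b 3 = 3 := by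
  have hle : Subgroup.closure {t 0, t 1} ≤
      (MulAction.stabilizer (Perm (Fin 4)) (3 : Fin 4)).comap toPerm := by
    rw [Subgroup.closure_le]
    rintro _ (rfl | rfl) <;> simp [MulAction.mem_stabilizer_iff] <;> decide
  exact hle hb

theorem two_le_movedCount_of_toPerm_apply_three {g : ClusterGroupA3} (hg : toPerm g 3 = 2) :
    2 ≤ movedCount g :=
  Perm.two_le_card_support_erase (by decide) (by decide) (by decide) hg

theorem three_le_movedCount_mul_t (j : Fin 3) (hj : toPerm (t j) 3 = 3) :
    3 ≤ movedCount (t 0 * t 1 * t 2 * t j) := by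
  fin_cases j <;> simp [movedCount] at hj ⊢ <;> decide

theorem len_t_mul_t_mul_t : len (t 0 * t 1 * t 2) = 3 :=
  le_antisymm (len_le_length [0, 1, 2] (by simp [mul_assoc]))
    ((show 3 ≤ movedCount (t 0 * t 1 * t 2) by simp [movedCount]; decide).trans
      (movedCount_le_len _))

theorem len_t_mul_t : len (t 1 * t 2) = 2 :=
  le_antisymm (len_le_length [1, 2] (by simp))
    ((show 2 ≤ movedCount (t 1 * t 2) by simp [movedCount]; decide).trans (movedCount_le_len _))

theorem t_mul_t_mul_t_mul_t_mul_t_mul_t : t 0 * t 1 * t 2 * (t 0 * t 1 * t 0) = t 1 * t 2 :=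
  calc t 0 * t 1 * t 2 * (t 0 * t 1 * t 0) = t 1 * t 2 * t 0 * t 1 * (t 1 * t 0) := by
        rw [← cycle_rel]; simp only [mul_assoc]
    _ = t 1 * t 2 := by
        simp only [mul_assoc, ← mul_assoc (t 1) (t 1), t_mul_self, one_mul, mul_one]

theorem two_le_len_mul_of_mem_closure {b : ClusterGroupA3}
    (hb : b ∈ Subgroup.closure {t 0, t 1}) : 2 ≤ len (t 0 * t 1 * t 2 * b) := by
  refine (two_le_movedCount_of_toPerm_apply_three ?_).trans (movedCount_le_len _)
  rw [map_mul, Perm.mul_apply, toPerm_apply_three_of_mem_closure hb]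
  simp only [map_mul, toPerm_t]
  decide

theorem eq_and_eq_one_of_len_add_len_eq {a b : ClusterGroupA3}
    (hb : b ∈ Subgroup.closure {t 0, t 1}) (hab : t 0 * t 1 * t 2 = a * b)
    (hlen : len a + len b = 3) : a = t 0 * t 1 * t 2 ∧ b = 1 := by
  have hlen_a : 2 ≤ len a := by
    simpa [hab, mul_inv_cancel_right] using
      two_le_len_mul_of_mem_closure (Subgroup.inv_mem _ hb)
  obtain hb0 | hb1 : len b = 0 ∨ len b = 1 := by omega
  · obtain rfl := len_eq_zero_iff.mp hb0
    exact ⟨by simpa using hab.symm, rfl⟩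
  · obtain ⟨j, rfl⟩ := exists_eq_t_of_len_eq_one hb1
    have ha : a = t 0 * t 1 * t 2 * t j := by rw [hab, mul_assoc, t_mul_self, mul_one]
    have := (three_le_movedCount_mul_t j (toPerm_apply_three_of_mem_closure hb)).trans
      (movedCount_le_len _)
    rw [← ha] at this
    omega

end ClusterGroupA3

open ClusterGroupA3

/-- For `I = {t₁, t₂}` and `w = t₁t₂t₃`: `l(w) = 3`, the element `t₂t₃` lies in `wG_I`,
has length `2`, which is minimal among elements of `wG_I`, yet the only length-additive
factorisation `w = ab` with `a ∈ G^I`, `b ∈ G_I` is `a = w`, `b = e`.  Hence a minimal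
length element of `wG_I` need not yield a length-additive factorisation of `w`. -/
theorem stmt_16 :
    let w : ClusterGroupA3 := t 0 * t 1 * t 2
    len w = 3 ∧
    (t 1 * t 2) ∈ leftCoset_GI w ∧ len (t 1 * t 2 : ClusterGroupA3) = 2 ∧
    (∀ u ∈ leftCoset_GI w, 2 ≤ len u) ∧
    ∀ a b : ClusterGroupA3, mem_GI_upper a →
      b ∈ Subgroup.closure ({t 0, t 1} : Set ClusterGroupA3) →
      w = a * b → len w = len a + len b → a = w ∧ b = 1 := by
  intro w
  have hmem : t 0 * t 1 * t 0 ∈ Subgroup.closure ({t 0, t 1} : Set ClusterGroupA3) :=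
    mul_mem (mul_mem (Subgroup.subset_closure (.inl rfl)) (Subgroup.subset_closure (.inr rfl)))
      (Subgroup.subset_closure (.inl rfl))
  refine ⟨len_t_mul_t_mul_t, ⟨_, hmem, t_mul_t_mul_t_mul_t_mul_t_mul_t.symm⟩, len_t_mul_t, ?_, ?_⟩
  · rintro u ⟨b, hb, rfl⟩
    exact two_le_len_mul_of_mem_closure hb
  · intro a b _ hb hab hlen
    exact eq_and_eq_one_of_len_add_len_eq hb hab (len_t_mul_t_mul_t ▸ hlen).symm
end
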